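/- Let λ ∈ ℂ with λ ≠ 0. For d1, d2 ∈ ℕ define c d1 d2 = (1/((2d1+1)!·(2d2+1)!)) · iteratedDeriv (2d2+1) (fun u2 : ℂ => iteratedDeriv (2d1+1) (fun u1 : ℂ => u1 * u2^2 * (-2*u1 - 2*u2)^((2*(d1:ℤ)+2*(d2:ℤ)-1)) ) λ) λ, the iterated residue at (u1,u2)=(λ,λ) of u1u2^2(-2u1-2u2)^{2d1+2d2-1}/((u1-λ)^{2(d1+1)}(u2-λ)^{2(d2+1)}). Then for all z1, z2 ∈ ℂ with |z1| < 1/100 and |z2| < 1/100, HasSum (fun p : ℕ × ℕ => z1^p.1 * z2^p.2 * c p.1 p.2) ((16*z2^2 - (1-4*z1)^2) / (4*((1-8*(z1+z2)+16*(z1-z2)^2)))). -/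

import Mathlib

open scoped Nat
open Finset

/-!
The integrand `u1 * u2^2 * (-2*u1 - 2*u2)^(2*d1 + 2*d2 - 1)` is homogeneous of degree
`2*d1 + 2*d2 + 2`, the total order of the iterated residue, so for `(d1, d2) ≠ (0, 0)` the residue
is just the coefficient of `u1^(2*d1+1) * u2^(2*d2+1)`, namely
`-(1/2) * 4^(d1+d2) * choose (2*d1 + 2*d2 - 1) (2*d1)`, whatever `λ` is; the `(0, 0)` residue, where
the exponent is `-1`, is `-1/4` by direct differentiation.

Writing `4 * z1 = u^2`, the row `d2 = e + 1` of the series is the even part of the binomial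
series of `(1 - u)^(-(2*e+2))`, hence a sum of the powers `r^(e+1)` and `s^(e+1)` of
`r = 4*z2/(1-u)^2` and `s = 4*z2/(1+u)^2`. Summing the two geometric series gives the claim, because
the discriminant factors as `((1-u)^2 - 4*z2) * ((1+u)^2 - 4*z2)`. The bound
`‖yukawaCoeff d1 d2‖ ≤ 16^(d1+d2)` makes the double series absolutely convergent, which justifies
summing by rows.
-/

section Monomials

variable {𝕜 : Type*} [NontriviallyNormedField 𝕜] {ι : Type*}

theorem iteratedDeriv_iteratedDeriv_sum_monomial (s : Finset ι) (a : ι → 𝕜) (p q : ι → ℕ)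
    (m n : ℕ) (x y : 𝕜) :
    iteratedDeriv n (fun y' => iteratedDeriv m (fun x' => ∑ i ∈ s, a i * x' ^ p i * y' ^ q i) x) y
      = ∑ i ∈ s, a i * (p i).descFactorial m * (q i).descFactorial n
          * x ^ (p i - m) * y ^ (q i - n) := by
  have inner : ∀ y', iteratedDeriv m (fun x' => ∑ i ∈ s, a i * x' ^ p i * y' ^ q i) x
      = ∑ i ∈ s, a i * (p i).descFactorial m * x ^ (p i - m) * y' ^ q i := by
    intro y'
    rw [iteratedDeriv_fun_sum fun i _ => by fun_prop]
    refine sum_congr rfl fun i _ => ?_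
    simp [mul_assoc]
  simp_rw [inner]
  rw [iteratedDeriv_fun_sum fun i _ => by fun_prop]
  refine sum_congr rfl fun i _ => ?_
  simp only [iteratedDeriv_const_mul_field, iteratedDeriv_pow]
  ring

theorem iteratedDeriv_iteratedDeriv_sum_monomial_of_homogeneous (s : Finset ι) (a : ι → 𝕜)
    {p q : ι → ℕ} {m n : ℕ} (hpq : ∀ i ∈ s, p i + q i = m + n) (x y : 𝕜) :
    iteratedDeriv n (fun y' => iteratedDeriv m (fun x' => ∑ i ∈ s, a i * x' ^ p i * y' ^ q i) x) y
      = m ! * n ! * ∑ i ∈ s with p i = m, a i := by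
  rw [iteratedDeriv_iteratedDeriv_sum_monomial, sum_filter, mul_sum]
  refine sum_congr rfl fun i hi => ?_
  have hi := hpq i hi
  split_ifs with h
  · obtain rfl : q i = n := by omega
    simp only [h, Nat.descFactorial_self, tsub_self, pow_zero, mul_one]
    ring
  · rcases Nat.lt_or_gt_of_ne h with h | h
    · simp [Nat.descFactorial_of_lt h]
    · simp [Nat.descFactorial_of_lt (show q i < n by omega)]

end Monomials

theorem HasSum.comp_two_mul_of_neg_one_pow_mul {𝕜 : Type*} [NormedField 𝕜] [CharZero 𝕜]
    {f : ℕ → 𝕜} {a b : 𝕜} (ha : HasSum f a) (hb : HasSum (fun n => (-1) ^ n * f n) b) :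
    HasSum (fun n => f (2 * n)) ((a + b) / 2) := by
  have hsum := (ha.add hb).div_const 2
  have hodd : ∀ n ∉ Set.range (2 * ·), (f n + (-1) ^ n * f n) / 2 = 0 := by
    intro n hn
    have : Odd n := Nat.not_even_iff_odd.1 fun ⟨m, hm⟩ => hn ⟨m, by dsimp only; omega⟩
    simp [this.neg_one_pow]
  convert ((mul_right_injective₀ (two_ne_zero : (2 : ℕ) ≠ 0)).hasSum_iff hodd).2 hsum using 1
  ext n
  simp [pow_mul]

theorem hasSum_choose_mul_pow_two_mul {𝕜 : Type*} [NormedField 𝕜] [CharZero 𝕜] (k : ℕ) {u : 𝕜}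
    (hu : ‖u‖ < 1) :
    HasSum (fun n => ((2 * n + k).choose k : 𝕜) * u ^ (2 * n))
      ((1 / (1 - u) ^ (k + 1) + 1 / (1 + u) ^ (k + 1)) / 2) := by
  have hneg := hasSum_choose_mul_geometric_of_norm_lt_one k (r := -u) (by rwa [norm_neg])
  rw [sub_neg_eq_add] at hneg
  refine (hasSum_choose_mul_geometric_of_norm_lt_one k hu).comp_two_mul_of_neg_one_pow_mul ?_
  simpa [neg_pow u, mul_left_comm] using hneg

noncomputable def iteratedResidue (Λ : ℂ) (d1 d2 : ℕ) : ℂ :=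
  (1 / (((2*d1+1)! : ℂ) * ((2*d2+1)! : ℂ))) *
    iteratedDeriv (2*d2+1) (fun u2 : ℂ =>
      iteratedDeriv (2*d1+1) (fun u1 : ℂ =>
        u1 * u2^2 * ((-2*u1 - 2*u2)^(2*(d1:ℤ)+2*(d2:ℤ)-1))) Λ) Λ

theorem mul_sq_mul_pow_eq_sum_monomials (k : ℕ) (x y : ℂ) :
    x * y ^ 2 * (-2 * x - 2 * y) ^ k
      = ∑ j ∈ range (k + 1), ((-2) ^ k * k.choose j : ℂ) * x ^ (j + 1) * y ^ (k - j + 2) := by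
  rw [show -2 * x - 2 * y = -2 * (x + y) by ring, mul_pow, add_pow, mul_sum, mul_sum]
  refine sum_congr rfl fun j _ => ?_
  ring

theorem neg_two_pow_two_mul_sub_one {N : ℕ} (hN : N ≠ 0) :
    (-2 : ℂ) ^ (2 * N - 1) = -(1 / 2) * 4 ^ N := by
  have hodd : Odd (2 * N - 1) := ⟨N - 1, by omega⟩
  have h : (2 : ℂ) ^ (2 * N - 1) * 2 = 4 ^ N := by
    rw [← pow_succ, Nat.sub_add_cancel (by omega), pow_mul]
    norm_num
  rw [hodd.neg_pow, ← h]
  ring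

theorem iteratedResidue_of_ne_zero (Λ : ℂ) {d1 d2 : ℕ} (hd : ¬(d1 = 0 ∧ d2 = 0)) :
    iteratedResidue Λ d1 d2 = -(1 / 2) * 4 ^ (d1 + d2) * ((2*d1+2*d2-1).choose (2*d1) : ℂ) := by
  unfold iteratedResidue
  set k := 2 * d1 + 2 * d2 - 1
  have hexp : 2 * (d1 : ℤ) + 2 * (d2 : ℤ) - 1 = (k : ℤ) := by omega
  simp_rw [hexp, zpow_natCast, mul_sq_mul_pow_eq_sum_monomials]
  rw [iteratedDeriv_iteratedDeriv_sum_monomial_of_homogeneous _ _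
    (fun j hj => by simp only [mem_range] at hj; omega)]
  have hsum : ∑ j ∈ range (k + 1) with j + 1 = 2 * d1 + 1, ((-2) ^ k * k.choose j : ℂ)
      = (-2) ^ k * k.choose (2 * d1) := by
    simp_rw [sum_filter, Nat.add_right_cancel_iff, sum_ite_eq', mem_range]
    split_ifs with h
    · rfl
    · rw [Nat.choose_eq_zero_of_lt (by omega), Nat.cast_zero, mul_zero]
  rw [hsum, show k = 2 * (d1 + d2) - 1 by omega, neg_two_pow_two_mul_sub_one (by omega)]
  have h1 : ((2 * d1 + 1)! : ℂ) ≠ 0 := mod_cast (2 * d1 + 1).factorial_ne_zero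
  have h2 : ((2 * d2 + 1)! : ℂ) ≠ 0 := mod_cast (2 * d2 + 1).factorial_ne_zero
  field_simp

open Filter Topology in
theorem deriv_deriv_residue_zero_zero {Λ : ℂ} (hΛ : Λ ≠ 0) :
    deriv (fun y => deriv (fun x => x * y ^ 2 * (-2 * x - 2 * y)⁻¹) Λ) Λ = -1 / 4 := by
  have hne : ∀ᶠ y in 𝓝 Λ, Λ + y ≠ 0 :=
    (continuous_const.add continuous_id).continuousAt.eventually_ne
      (by simpa [← two_mul] using hΛ)
  have inner : (fun y => deriv (fun x => x * y ^ 2 * (-2 * x - 2 * y)⁻¹) Λ)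
      =ᶠ[𝓝 Λ] fun y => -y ^ 3 / (2 * (Λ + y) ^ 2) := by
    filter_upwards [hne] with y hy
    have hy' : -2 * Λ - 2 * y ≠ 0 := by contrapose! hy; linear_combination -hy / 2
    have hx := ((hasDerivAt_id Λ).mul_const (y ^ 2)).fun_mul
      ((((hasDerivAt_id Λ).const_mul (-2)).sub_const (2 * y)).fun_inv hy')
    simp only [id] at hx
    rw [hx.deriv, show -2 * Λ - 2 * y = -2 * (Λ + y) by ring]
    field_simp
    ring
  rw [inner.deriv_eq]
  have h2 : (2 * (Λ + Λ) ^ 2) ≠ 0 := by simpa [← two_mul] using hΛ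
  have hy := (hasDerivAt_pow 3 Λ).fun_neg.fun_div
    ((((hasDerivAt_id Λ).const_add Λ).fun_pow 2).const_mul 2) h2
  simp only [id] at hy
  rw [hy.deriv]
  field_simp
  ring

noncomputable def yukawaCoeff (d1 d2 : ℕ) : ℂ :=
  if d1 = 0 ∧ d2 = 0 then -1 / 4 else -(1 / 2) * 4 ^ (d1 + d2) * ((2*d1+2*d2-1).choose (2*d1) : ℂ)

theorem iteratedResidue_eq_yukawaCoeff {Λ : ℂ} (hΛ : Λ ≠ 0) (d1 d2 : ℕ) :
    iteratedResidue Λ d1 d2 = yukawaCoeff d1 d2 := by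
  unfold iteratedResidue yukawaCoeff
  split_ifs with hd
  · obtain ⟨rfl, rfl⟩ := hd
    simpa [iteratedDeriv_one, zpow_neg_one] using deriv_deriv_residue_zero_zero hΛ
  · exact iteratedResidue_of_ne_zero Λ hd

theorem hasSum_yukawaCoeff_row_zero (z1 z2 : ℂ) :
    HasSum (fun d1 => z1 ^ d1 * z2 ^ 0 * yukawaCoeff d1 0) (-1 / 4) := by
  convert hasSum_single (f := fun d1 => z1 ^ d1 * z2 ^ 0 * yukawaCoeff d1 0) 0 fun d1 hd1 => ?_
  · simp [yukawaCoeff]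
  · simp [yukawaCoeff, hd1, Nat.choose_eq_zero_of_lt (show 2 * d1 - 1 < 2 * d1 by omega)]

theorem hasSum_yukawaCoeff_row_succ {z1 u : ℂ} (hu : u ^ 2 = 4 * z1) (hu1 : ‖u‖ < 1)
    (z2 : ℂ) (e : ℕ) :
    HasSum (fun d1 => z1 ^ d1 * z2 ^ (e + 1) * yukawaCoeff d1 (e + 1))
      (-(1 / 4) * ((4 * z2 / (1 - u) ^ 2) ^ (e + 1) + (4 * z2 / (1 + u) ^ 2) ^ (e + 1))) := by
  have hsub : 1 - u ≠ 0 := fun h => by simp [show u = 1 by linear_combination -h] at hu1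
  have hadd : 1 + u ≠ 0 := fun h => by simp [show u = -1 by linear_combination h] at hu1
  have hval : -(1 / 4) * ((4 * z2 / (1 - u) ^ 2) ^ (e + 1) + (4 * z2 / (1 + u) ^ 2) ^ (e + 1))
      = -(1 / 2) * (4 * z2) ^ (e + 1)
        * ((1 / (1 - u) ^ (2 * e + 1 + 1) + 1 / (1 + u) ^ (2 * e + 1 + 1)) / 2) := by
    rw [div_pow, div_pow, ← pow_mul, ← pow_mul, show 2 * (e + 1) = 2 * e + 1 + 1 by ring]
    field_simp
    ring
  rw [hval]
  refine ((hasSum_choose_mul_pow_two_mul (2 * e + 1) hu1).mul_left _).congr_fun fun d1 => ?_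
  rw [yukawaCoeff, if_neg (by omega), show 2 * d1 + 2 * (e + 1) - 1 = 2 * d1 + (2 * e + 1) by omega,
    Nat.choose_symm_add, pow_mul, hu]
  ring

theorem norm_yukawaCoeff_le (d1 d2 : ℕ) : ‖yukawaCoeff d1 d2‖ ≤ 16 ^ (d1 + d2) := by
  unfold yukawaCoeff
  split_ifs with hd
  · obtain ⟨rfl, rfl⟩ := hd
    norm_num
  · set N := d1 + d2
    have hchoose : ((2*d1+2*d2-1).choose (2*d1) : ℝ) ≤ 4 ^ N := by
      calc ((2*d1+2*d2-1).choose (2*d1) : ℝ) ≤ 2 ^ (2*d1+2*d2-1) :=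
            mod_cast Nat.choose_le_two_pow _ _
        _ ≤ 2 ^ (2 * N) := pow_le_pow_right₀ one_le_two (by omega)
        _ = 4 ^ N := by rw [pow_mul]; norm_num
    have hnorm : ‖-(1 / 2) * 4 ^ N * ((2*d1+2*d2-1).choose (2*d1) : ℂ)‖
        = 1 / 2 * 4 ^ N * ((2*d1+2*d2-1).choose (2*d1) : ℝ) := by
      simp
    rw [hnorm, show (16 : ℝ) ^ N = 4 ^ N * 4 ^ N by rw [← mul_pow]; norm_num]
    nlinarith [pow_pos (show (0 : ℝ) < 4 by norm_num) N]

theorem summable_yukawa_series {z1 z2 : ℂ} (hz1 : ‖z1‖ < 1 / 16) (hz2 : ‖z2‖ < 1 / 16) :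
    Summable fun p : ℕ × ℕ => z1 ^ p.1 * z2 ^ p.2 * yukawaCoeff p.1 p.2 := by
  have hgeom (z : ℂ) (hz : ‖z‖ < 1 / 16) : Summable fun n : ℕ => (16 * ‖z‖) ^ n :=
    summable_geometric_of_lt_one (by positivity) (by linarith)
  refine Summable.of_norm_bounded ((hgeom z1 hz1).mul_of_nonneg (hgeom z2 hz2)
    (fun _ => by positivity) (fun _ => by positivity)) fun p => ?_
  calc ‖z1 ^ p.1 * z2 ^ p.2 * yukawaCoeff p.1 p.2‖
      ≤ ‖z1‖ ^ p.1 * ‖z2‖ ^ p.2 * 16 ^ (p.1 + p.2) := by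
        rw [norm_mul, norm_mul, norm_pow, norm_pow]
        gcongr
        exact norm_yukawaCoeff_le _ _
    _ = (16 * ‖z1‖) ^ p.1 * (16 * ‖z2‖) ^ p.2 := by ring

theorem norm_four_mul_lt_norm_one_sub_sq {w z : ℂ} (hw : ‖w‖ < 1 / 5) (hz : ‖z‖ < 1 / 100) :
    ‖4 * z‖ < ‖(1 - w) ^ 2‖ := by
  have h : 4 / 5 ≤ ‖1 - w‖ := by
    have := norm_sub_norm_le (1 : ℂ) w
    rw [norm_one] at this
    linarith
  rw [norm_mul, norm_pow, Complex.norm_ofNat]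
  nlinarith

theorem one_sub_eight_mul_add_eq_mul {z1 z2 u : ℂ} (hu : u ^ 2 = 4 * z1) :
    1 - 8 * (z1 + z2) + 16 * (z1 - z2) ^ 2 = ((1 - u) ^ 2 - 4 * z2) * ((1 + u) ^ 2 - 4 * z2) := by
  obtain rfl : z1 = u ^ 2 / 4 := by linear_combination -hu / 4
  ring

theorem yukawa_geometric_sum_eq {z1 z2 u : ℂ} (hu : u ^ 2 = 4 * z1)
    (hsub : ‖4 * z2‖ < ‖(1 - u) ^ 2‖) (hadd : ‖4 * z2‖ < ‖(1 + u) ^ 2‖) :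
    -(1 / 4) * ((1 - 4 * z2 / (1 - u) ^ 2)⁻¹ + (1 - 4 * z2 / (1 + u) ^ 2)⁻¹) + 1 / 4
      = (16 * z2 ^ 2 - (1 - 4 * z1) ^ 2) / (4 * (1 - 8 * (z1 + z2) + 16 * (z1 - z2) ^ 2)) := by
  have h1 : (1 - u) ^ 2 - 4 * z2 ≠ 0 := fun h => hsub.ne' (congrArg norm (sub_eq_zero.1 h))
  have h2 : (1 + u) ^ 2 - 4 * z2 ≠ 0 := fun h => hadd.ne' (congrArg norm (sub_eq_zero.1 h))
  have h3 : (1 - u) ^ 2 ≠ 0 := norm_pos_iff.1 ((norm_nonneg _).trans_lt hsub)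
  have h4 : (1 + u) ^ 2 ≠ 0 := norm_pos_iff.1 ((norm_nonneg _).trans_lt hadd)
  rw [one_sub_eight_mul_add_eq_mul hu, one_sub_div h3, one_sub_div h4, inv_div, inv_div]
  obtain rfl : z1 = u ^ 2 / 4 := by linear_combination -hu / 4
  field_simp
  ring

theorem hasSum_yukawa_series {z1 z2 : ℂ} (hz1 : ‖z1‖ < 1 / 100) (hz2 : ‖z2‖ < 1 / 100) :
    HasSum (fun p : ℕ × ℕ => z1 ^ p.1 * z2 ^ p.2 * yukawaCoeff p.1 p.2)
      ((16 * z2 ^ 2 - (1 - 4 * z1) ^ 2) / (4 * (1 - 8 * (z1 + z2) + 16 * (z1 - z2) ^ 2))) := by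
  obtain ⟨u, hu⟩ := IsAlgClosed.exists_pow_nat_eq (4 * z1) two_pos
  have hu5 : ‖u‖ < 1 / 5 := by
    refine lt_of_pow_lt_pow_left₀ 2 (by norm_num) ?_
    rw [← norm_pow, hu, norm_mul, Complex.norm_ofNat]
    linarith
  have hsub := norm_four_mul_lt_norm_one_sub_sq hu5 hz2
  have hadd : ‖4 * z2‖ < ‖(1 + u) ^ 2‖ := by
    simpa using norm_four_mul_lt_norm_one_sub_sq (w := -u) (by rwa [norm_neg]) hz2
  set r := 4 * z2 / (1 - u) ^ 2
  set s := 4 * z2 / (1 + u) ^ 2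
  have hr : ‖r‖ < 1 := by
    rw [norm_div]; exact (div_lt_one ((norm_nonneg _).trans_lt hsub)).2 hsub
  have hs : ‖s‖ < 1 := by
    rw [norm_div]; exact (div_lt_one ((norm_nonneg _).trans_lt hadd)).2 hadd
  have hrows (d2 : ℕ) : HasSum (fun d1 => z1 ^ d1 * z2 ^ d2 * yukawaCoeff d1 d2)
      (-(1 / 4) * (r ^ d2 + s ^ d2) + if d2 = 0 then 1 / 4 else 0) := by
    cases d2 with
    | zero =>
      rw [show -(1 / 4) * (r ^ 0 + s ^ 0) + (if 0 = 0 then 1 / 4 else 0) = (-1 / 4 : ℂ) by norm_num]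
      exact hasSum_yukawaCoeff_row_zero z1 z2
    | succ e => simpa using hasSum_yukawaCoeff_row_succ hu (by linarith) z2 e
  have hcols : HasSum (fun d2 => -(1 / 4) * (r ^ d2 + s ^ d2) + if d2 = 0 then 1 / 4 else 0)
      (-(1 / 4) * ((1 - r)⁻¹ + (1 - s)⁻¹) + 1 / 4) :=
    (((hasSum_geometric_of_norm_lt_one hr).add (hasSum_geometric_of_norm_lt_one hs)).mul_left _).add
      (hasSum_ite_eq 0 _)
  have hsum : Summable fun p : ℕ × ℕ => z1 ^ p.1 * z2 ^ p.2 * yukawaCoeff p.1 p.2 :=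
    summable_yukawa_series (by linarith) (by linarith)
  obtain ⟨S, hS⟩ := hsum.prod_symm
  rw [← yukawa_geometric_sum_eq hu hsub hadd, ← (hS.prod_fiberwise hrows).unique hcols]
  exact (Equiv.prodComm ℕ ℕ).hasSum_iff.1 hS

theorem stmt11 (Λ : ℂ) (hΛ : Λ ≠ 0) (c : ℕ → ℕ → ℂ)
    (hc : ∀ d1 d2 : ℕ, c d1 d2 =
      (1 / (((2*d1+1)! : ℂ) * ((2*d2+1)! : ℂ))) *
      iteratedDeriv (2*d2+1) (fun u2 : ℂ =>
        iteratedDeriv (2*d1+1) (fun u1 : ℂ =>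
          u1 * u2^2 * ((-2*u1 - 2*u2)^(2*(d1:ℤ)+2*(d2:ℤ)-1))) Λ) Λ) :
    ∀ z1 z2 : ℂ, ‖z1‖ < 1/100 → ‖z2‖ < 1/100 →
      HasSum (fun p : ℕ × ℕ => z1^p.1 * z2^p.2 * c p.1 p.2)
        ((16*z2^2 - (1-4*z1)^2) / (4*(1 - 8*(z1+z2) + 16*(z1-z2)^2))) := by
  intro z1 z2 hz1 hz2
  have hc' : c = yukawaCoeff :=
    funext₂ fun d1 d2 => (hc d1 d2).trans (iteratedResidue_eq_yukawaCoeff hΛ d1 d2)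
  exact hc' ▸ hasSum_yukawa_series hz1 hz2
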